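/- Let K ⊆ ℝ^n be nonempty and compact. Then sup over (u₁, …, u_{n+1}) ∈ K^{n+1} of min_{x ∈ ℝ^n} max_{1 ≤ i ≤ n+1} ‖uᵢ - x‖ equals the Chebyshev radius r(K) = inf_{x ∈ ℝ^n} sup_{u ∈ K} ‖u - x‖. -/
import Mathlib

open Metric Set

theorem maxmin_reformulation (n : ℕ) (K : Set (EuclideanSpace ℝ (Fin n)))
    (hK : IsCompact K) (hne : K.Nonempty) :
    sSup {g : ℝ | ∃ U : Fin (n + 1) → EuclideanSpace ℝ (Fin n), (∀ i, U i ∈ K) ∧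
        g = ⨅ x : EuclideanSpace ℝ (Fin n), ⨆ i : Fin (n + 1), ‖U i - x‖} =
      ⨅ x : EuclideanSpace ℝ (Fin n), sSup ((fun u => ‖u - x‖) '' K) := by
  classical
  let E := EuclideanSpace ℝ (Fin n)
  set S : Set ℝ := {g : ℝ | ∃ U : Fin (n + 1) → E, (∀ i, U i ∈ K) ∧
      g = ⨅ x : E, ⨆ i : Fin (n + 1), ‖U i - x‖} with hS
  obtain ⟨u₀, hu₀⟩ := hne
  -- basic boundedness facts
  have himg : ∀ x : E, BddAbove ((fun u => ‖u - x‖) '' K) := fun x =>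
    (hK.image ((continuous_sub_right x).norm)).bddAbove
  have himgne : ∀ x : E, ((fun u => ‖u - x‖) '' K).Nonempty := fun x => ⟨_, ⟨u₀, hu₀, rfl⟩⟩
  have hsupbdd : ∀ U : Fin (n + 1) → E, ∀ x : E,
      BddAbove (Set.range fun i : Fin (n + 1) => ‖U i - x‖) := fun U x =>
    (Set.finite_range _).bddAbove
  have hsupnn : ∀ U : Fin (n + 1) → E, ∀ x : E, 0 ≤ ⨆ i : Fin (n + 1), ‖U i - x‖ := fun U x =>
    le_trans (norm_nonneg (U 0 - x)) (le_ciSup (hsupbdd U x) 0)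
  have hinfbdd : ∀ U : Fin (n + 1) → E,
      BddBelow (Set.range fun x : E => ⨆ i : Fin (n + 1), ‖U i - x‖) := fun U =>
    ⟨0, by rintro _ ⟨x, rfl⟩; exact hsupnn U x⟩
  -- S is nonempty
  have hSne : S.Nonempty := ⟨_, fun _ => u₀, fun _ => hu₀, rfl⟩
  -- S is bounded above
  have hSbdd : BddAbove S := by
    refine ⟨sSup ((fun u => ‖u - (0 : E)‖) '' K), ?_⟩
    rintro g ⟨U, hU, rfl⟩
    refine le_trans (ciInf_le (hinfbdd U) (0 : E)) ?_
    exact ciSup_le fun i => le_csSup (himg 0) ⟨U i, hU i, rfl⟩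
  set r := sSup S with hr
  have key : ∀ ε > (0 : ℝ), ∃ x : E, ∀ u ∈ K, ‖u - x‖ ≤ r + ε := by
    intro ε hε
    have hnK : Nonempty ↥K := ⟨⟨u₀, hu₀⟩⟩
    have hHelly : (⋂ u : ↥K, closedBall (u : E) (r + ε)).Nonempty := by
      apply Convex.helly_theorem_compact' (𝕜 := ℝ)
        (fun u => convex_closedBall _ _) (fun u => isCompact_closedBall _ _)
      intro I hIcard
      rcases I.eq_empty_or_nonempty with rfl | ⟨v₀, hv₀⟩
      · simp
      rw [finrank_euclideanSpace_fin] at hIcard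
      -- build a tuple U : Fin (n+1) → E covering I
      set l := I.toList with hl
      have hlen : l.length ≤ n + 1 := by
        rw [hl, Finset.length_toList]; exact hIcard
      set U : Fin (n + 1) → E := fun i => ((l.getD i v₀ : ↥K) : E) with hUdef
      have hUK : ∀ i, U i ∈ K := fun i => (l.getD i v₀).2
      have hcover : ∀ u ∈ I, ∃ i : Fin (n + 1), U i = (u : E) := by
        intro u hu
        have : u ∈ l := by rw [hl]; exact Finset.mem_toList.2 hu
        obtain ⟨k, hk, hget⟩ := List.mem_iff_getElem.1 this
        refine ⟨⟨k, lt_of_lt_of_le hk hlen⟩, ?_⟩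
        simp only [hUdef]
        rw [List.getD_eq_getElem l v₀ hk]
        exact congrArg _ hget
      have hgS : (⨅ x : E, ⨆ i : Fin (n + 1), ‖U i - x‖) ∈ S := ⟨U, hUK, rfl⟩
      have hinf : (⨅ x : E, ⨆ i : Fin (n + 1), ‖U i - x‖) < r + ε :=
        lt_of_le_of_lt (le_csSup hSbdd hgS) (by linarith)
      obtain ⟨x, hx⟩ := exists_lt_of_ciInf_lt hinf
      refine ⟨x, ?_⟩
      simp only [Set.mem_iInter]
      intro u hu
      obtain ⟨i, hi⟩ := hcover u hu
      rw [mem_closedBall, dist_comm, dist_eq_norm, ← hi]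
      exact le_of_lt (lt_of_le_of_lt (le_ciSup (hsupbdd U x) i) hx)
    obtain ⟨x, hx⟩ := hHelly
    simp only [Set.mem_iInter, mem_closedBall] at hx
    refine ⟨x, fun u hu => ?_⟩
    have := hx ⟨u, hu⟩
    rwa [dist_comm, dist_eq_norm] at this
  apply le_antisymm
  · -- sSup S ≤ RHS
    refine csSup_le hSne ?_
    rintro g ⟨U, hU, rfl⟩
    refine le_ciInf fun x => ?_
    refine le_trans (ciInf_le (hinfbdd U) x) ?_
    exact ciSup_le fun i => le_csSup (himg x) ⟨U i, hU i, rfl⟩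
  · -- RHS ≤ r
    refine le_of_forall_pos_le_add fun ε hε => ?_
    obtain ⟨x, hx⟩ := key ε hε
    have hbb : BddBelow (Set.range fun x : E => sSup ((fun u => ‖u - x‖) '' K)) := by
      refine ⟨0, ?_⟩
      rintro _ ⟨y, rfl⟩
      refine Real.sSup_nonneg ?_
      rintro _ ⟨u, hu, rfl⟩
      exact norm_nonneg _
    refine le_trans (ciInf_le hbb x) (csSup_le (himgne x) ?_)
    rintro _ ⟨u, hu, rfl⟩
    exact hx u hu
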